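/- Assume each f_n is convex (jointly) on ℝ^T × ℝ^T, f_n(u,·) is L₂-Lipschitz on ℝ^T for every n and u (L₂ > 0), the clustering hypotheses (a)–(d) hold, and Φ is β-aggregatively strongly monotone on B_R = {x ∈ (ℝ^T)^N : ‖x_n‖ ≤ R for all n} with β > 0, i.e. ⟨g − h, x − y⟩ ≥ Nβ‖x̄ − ȳ‖² for all x, y ∈ B_R, g ∈ Φ(x), h ∈ Φ(y). Let x = (x_i)_{i∈I} be an SVWE of the auxiliary population game with average x̄ = (1/N)∑_i |N_i|·x_i, and x̂ ∈ X(A) a VNE of the original atomic game with average x̄̂ = (1/N)∑_n x̂_n. Then ‖x̄ − x̄̂‖ ≤ √(2·R·L₂/(β·N)) + √(K/β), where K = 2R·(3·L₁·D/ρ + D_f). -/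

import Mathlib

open scoped RealInnerProductSpace

noncomputable section

/-- `ℝ^T`. -/
abbrev Vec (T : ℕ) := EuclideanSpace ℝ (Fin T)

/-- The subdifferential of `φ : E → ℝ` at `x`. -/
def subdiff {E : Type*} [NormedAddCommGroup E] [InnerProductSpace ℝ E]
    (φ : E → ℝ) (x : E) : Set E :=
  {g | ∀ y, φ x + ⟪g, y - x⟫ ≤ φ y}

/-- Profiles `(ℝ^T)^N` with the norm `‖x‖² = ∑ₙ ‖xₙ‖²`. -/
abbrev Profile (N T : ℕ) := PiLp 2 (fun _ : Fin N => Vec T)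

/-- Average action `x̄ = (1/N) ∑ₙ xₙ`. -/
def avg {N T : ℕ} (x : Profile N T) : Vec T := (1 / (N : ℝ)) • ∑ n, x n

/-- `x̄₋ₙ = (1/N) ∑_{m ≠ n} xₘ`. -/
def avgOther {N T : ℕ} (x : Profile N T) (n : Fin N) : Vec T :=
  (1 / (N : ℝ)) • ∑ m ∈ Finset.univ.erase n, x m

/-- Feasible profiles satisfying the coupling constraint: `X(A)`. -/
def XA {N T : ℕ} (Xset : Fin N → Set (Vec T)) (A : Set (Vec T)) : Set (Profile N T) :=
  {x | (∀ n, x n ∈ Xset n) ∧ avg x ∈ A}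

/-- `Φ(x) = ∏ₙ ∂₁fₙ(xₙ, x̄)`. -/
def Phi {N T : ℕ} (f : Fin N → Vec T → Vec T → ℝ) (x : Profile N T) : Set (Profile N T) :=
  {g | ∀ n, g n ∈ subdiff (fun y => f n y (avg x)) (x n)}

/-- `Φ̂(x) = ∏ₙ ∂₁f̂ₙ(xₙ, x̄₋ₙ)` where `f̂ₙ(u,a) = fₙ(u, a + u/N)`. -/
def PhiHat {N T : ℕ} (f : Fin N → Vec T → Vec T → ℝ) (x : Profile N T) : Set (Profile N T) :=
  {g | ∀ n, g n ∈ subdiff (fun u => f n u (avgOther x n + (1 / (N : ℝ)) • u)) (x n)}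

/-- Number of players in group `i`, i.e. `|N_i|` where `N_i = cl⁻¹(i)`. -/
def clCard {N : ℕ} {I : Type*} [Fintype I] [DecidableEq I] (cl : Fin N → I) (i : I) : ℕ :=
  (Finset.univ.filter fun n => cl n = i).card

/-- Average of a population profile: `x̄ = (1/N) ∑ᵢ |N_i| • xᵢ`. -/
def avgI {N T : ℕ} {I : Type*} [Fintype I] [DecidableEq I] (cl : Fin N → I)
    (x : I → Vec T) : Vec T :=
  (1 / (N : ℝ)) • ∑ i, (clCard cl i : ℝ) • x i

/-- Feasible symmetric population profiles `X^I(A)`. -/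
def XIA {N T : ℕ} {I : Type*} [Fintype I] [DecidableEq I] (cl : Fin N → I)
    (Yset : I → Set (Vec T)) (A : Set (Vec T)) : Set (I → Vec T) :=
  {x | (∀ i, x i ∈ Yset i) ∧ avgI cl x ∈ A}

/-- The player profile associated to a population profile: `ψ(x)ₙ = x_{i(n)}`. -/
def psiMap {N T : ℕ} {I : Type*} (cl : Fin N → I) (x : I → Vec T) : Profile N T :=
  WithLp.toLp 2 (fun n => x (cl n))


section Helpers

variable {T : ℕ}

lemma sqrt_add_le_sqrt_add_sqrt {a b : ℝ} (ha : 0 ≤ a) (hb : 0 ≤ b) :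
    Real.sqrt (a + b) ≤ Real.sqrt a + Real.sqrt b := by
  have h1 : a + b ≤ (Real.sqrt a + Real.sqrt b) ^ 2 := by
    nlinarith [Real.sq_sqrt ha, Real.sq_sqrt hb, Real.sqrt_nonneg a, Real.sqrt_nonneg b]
  calc Real.sqrt (a + b) ≤ Real.sqrt ((Real.sqrt a + Real.sqrt b) ^ 2) := Real.sqrt_le_sqrt h1
    _ = Real.sqrt a + Real.sqrt b := by
        rw [Real.sqrt_sq (by positivity)]

lemma subdiff_isClosed (φ : Vec T → ℝ) (x : Vec T) : IsClosed (subdiff φ x) := by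
  have h : subdiff φ x = ⋂ y, {g : Vec T | φ x + ⟪g, y - x⟫ ≤ φ y} := by
    ext g; simp [subdiff, Set.mem_iInter]
  rw [h]
  refine isClosed_iInter fun y => ?_
  exact isClosed_le (continuous_const.add (Continuous.inner continuous_id continuous_const)) continuous_const

lemma subdiff_norm_le {L : ℝ} (hL : 0 ≤ L) {φ : Vec T → ℝ}
    (hLip : ∀ u u', |φ u - φ u'| ≤ L * ‖u - u'‖)
    {x g : Vec T} (hg : g ∈ subdiff φ x) : ‖g‖ ≤ L := by
  have h := hg (x + g)
  rw [add_sub_cancel_left, real_inner_self_eq_norm_sq] at h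
  have h2 : |φ (x + g) - φ x| ≤ L * ‖x + g - x‖ := hLip _ _
  rw [add_sub_cancel_left] at h2
  have h3 : ‖g‖ ^ 2 ≤ L * ‖g‖ := by
    have := (abs_le.1 h2).2
    linarith
  rcases eq_or_lt_of_le (norm_nonneg g) with h0 | h0
  · rw [← h0]; exact hL
  · nlinarith

lemma lipschitz_continuous {L : ℝ} {φ : Vec T → ℝ}
    (h : ∀ u u', |φ u - φ u'| ≤ L * ‖u - u'‖) : Continuous φ := by
  have : LipschitzWith (max L 0).toNNReal φ := by
    apply LipschitzWith.of_dist_le_mul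
    intro u u'
    rw [Real.dist_eq, dist_eq_norm, Real.coe_toNNReal _ (le_max_right L 0)]
    exact le_trans (h u u')
      (mul_le_mul_of_nonneg_right (le_max_left L 0) (norm_nonneg _))
  exact this.continuous

lemma convexOn_slice {f : Vec T → Vec T → ℝ}
    (hf : ConvexOn ℝ Set.univ (fun p : Vec T × Vec T => f p.1 p.2)) (v : Vec T) :
    ConvexOn ℝ Set.univ (fun u : Vec T => f u v) := by
  refine ⟨convex_univ, fun u _ u' _ a b ha hb hab => ?_⟩
  have h := hf.2 (Set.mem_univ (u, v)) (Set.mem_univ (u', v)) ha hb hab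
  have hv : a • v + b • v = v := Convex.combo_self hab v
  simpa [Prod.smul_mk, Prod.mk_add_mk, hv] using h

lemma exists_subdiff {φ : Vec T → ℝ} (hconv : ConvexOn ℝ Set.univ φ)
    (hcont : Continuous φ) (x : Vec T) : ∃ g, g ∈ subdiff φ x := by
  set S : Set (Vec T × ℝ) := {p | φ p.1 < p.2} with hS
  have hSopen : IsOpen S := isOpen_lt (hcont.comp continuous_fst) continuous_snd
  have hSconv : Convex ℝ S := by
    intro p hp q hq a b ha hb hab
    have h1 : φ (a • p.1 + b • q.1) ≤ a * φ p.1 + b * φ q.1 :=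
      hconv.2 (Set.mem_univ _) (Set.mem_univ _) ha hb hab
    have hp' : φ p.1 < p.2 := hp
    have hq' : φ q.1 < q.2 := hq
    have key : a * φ p.1 + b * φ q.1 < a * p.2 + b * q.2 := by
      rcases lt_or_eq_of_le ha with ha' | ha'
      · rcases lt_or_eq_of_le hb with hb' | hb'
        · have := mul_lt_mul_of_pos_left hp' ha'
          have := mul_lt_mul_of_pos_left hq' hb'
          linarith
        · have hb1 : b = 0 := hb'.symm
          have ha1 : a = 1 := by rw [hb1] at hab; linarith
          rw [hb1, ha1]; simpa using hp'
      · have ha1 : a = 0 := ha'.symm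
        have hb1 : b = 1 := by rw [ha1] at hab; linarith
        rw [ha1, hb1]; simpa using hq'
    show φ ((a • p + b • q).1) < (a • p + b • q).2
    simp only [Prod.fst_add, Prod.snd_add, Prod.smul_fst, Prod.smul_snd, smul_eq_mul]
    exact lt_of_le_of_lt h1 key
  have hxS : (x, φ x) ∉ S := by simp [hS]
  obtain ⟨ψ, hψ⟩ := geometric_hahn_banach_open_point hSconv hSopen hxS
  set c : ℝ := ψ (0, 1) with hcdef
  have hdecomp : ∀ (y : Vec T) (t : ℝ), ψ (y, t) = ψ (y, 0) + t * c := by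
    intro y t
    have h : ((y, t) : Vec T × ℝ) = (y, (0:ℝ)) + t • ((0 : Vec T), (1:ℝ)) := by
      simp [Prod.ext_iff]
    rw [h, map_add, map_smul, smul_eq_mul, hcdef]
  have hc : c < 0 := by
    have h := hψ (x, φ x + 1) (by simp [hS])
    rw [hdecomp x (φ x + 1), hdecomp x (φ x)] at h
    linarith
  have hcpos : 0 < -c := by linarith
  have hkey : ∀ y, ψ (y, 0) + φ y * c ≤ ψ (x, 0) + φ x * c := by
    intro y
    have h2 : ∀ ε : ℝ, 0 < ε → ψ (y, 0) + φ y * c ≤ ψ (x, 0) + φ x * c + ε := by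
      intro ε hε
      have hδ : 0 < ε / (-c) := div_pos hε hcpos
      have hmem : ((y, φ y + ε / (-c)) : Vec T × ℝ) ∈ S := by
        simp only [hS, Set.mem_setOf_eq]; linarith
      have h := hψ _ hmem
      rw [hdecomp y (φ y + ε / (-c)), hdecomp x (φ x)] at h
      have hc' : (φ y + ε / (-c)) * c = φ y * c - ε := by
        rw [add_mul, div_mul_eq_mul_div, mul_div_assoc, div_neg, div_self hc.ne]; ring
      rw [hc'] at h
      linarith
    exact le_of_forall_pos_le_add h2
  set u : Vec T := (InnerProductSpace.toDual ℝ (Vec T)).symm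
    (ψ.comp (ContinuousLinearMap.inl ℝ (Vec T) ℝ)) with hudef
  have hu : ∀ y : Vec T, ⟪u, y⟫ = ψ (y, 0) := by
    intro y
    rw [hudef, InnerProductSpace.toDual_symm_apply]
    rfl
  refine ⟨(-c)⁻¹ • u, fun y => ?_⟩
  have h3 := hkey y
  have h4 : ⟪(-c)⁻¹ • u, y - x⟫ = (-c)⁻¹ * (ψ (y, 0) - ψ (x, 0)) := by
    rw [real_inner_smul_left, inner_sub_right, hu, hu]
  have h5 : (-c)⁻¹ * (ψ (y, 0) - ψ (x, 0)) ≤ φ y - φ x := by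
    rw [inv_mul_le_iff₀ hcpos]
    nlinarith
  rw [h4]
  linarith

lemma deep_ball_subset {s : Set (Vec T)} (hcl : IsClosed s)
    {z : Vec T} (hz : z ∈ s) {ρ : ℝ}
    (hdeep : ∀ w ∈ intrinsicFrontier ℝ s, ρ ≤ dist z w)
    {y : Vec T} (hy : y ∈ affineSpan ℝ s) (hdist : dist y z ≤ ρ) : y ∈ s := by
  by_contra hys
  have hyz : y ≠ z := fun h => hys (h ▸ hz)
  set γ : ℝ → Vec T := fun t => z + t • (y - z) with hγ
  have hγcont : Continuous γ := by fun_prop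
  set S : Set ℝ := {t | t ∈ Set.Icc (0:ℝ) 1 ∧ γ t ∈ s} with hSdef
  have hScl : IsClosed S := (isClosed_Icc.preimage continuous_id).inter (hcl.preimage hγcont)
  have hScomp : IsCompact S := (isCompact_Icc (a := (0:ℝ)) (b := 1)).of_isClosed_subset hScl
    (fun t ht => ht.1)
  have h0S : (0:ℝ) ∈ S := by
    constructor
    · exact ⟨le_refl 0, zero_le_one⟩
    · simpa [hγ] using hz
  have hSne : S.Nonempty := ⟨0, h0S⟩
  set t₀ : ℝ := sSup S with ht₀
  have ht₀S : t₀ ∈ S := hScomp.sSup_mem hSne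
  have ht₀1 : t₀ < 1 := by
    rcases lt_or_eq_of_le ht₀S.1.2 with h | h
    · exact h
    · exfalso; apply hys; have := ht₀S.2; rw [h] at this; simpa [hγ] using this
  have hnotmem : ∀ t, t₀ < t → t ≤ 1 → γ t ∉ s := by
    intro t ht ht1 hmem
    have htS : t ∈ S := ⟨⟨le_trans ht₀S.1.1 ht.le, ht1⟩, hmem⟩
    exact absurd (le_csSup hScomp.bddAbove htS) (not_le.2 ht)
  set w : Vec T := γ t₀ with hw
  have hws : w ∈ s := ht₀S.2
  -- w is in the affine span
  have hzspan : z ∈ affineSpan ℝ s := subset_affineSpan ℝ s hz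
  have hdir : y - z ∈ (affineSpan ℝ s).direction := by
    have := AffineSubspace.vsub_mem_direction hy hzspan
    simpa using this
  have hγspan : ∀ t : ℝ, γ t ∈ affineSpan ℝ s := by
    intro t
    have h1 : t • (y - z) ∈ (affineSpan ℝ s).direction := Submodule.smul_mem _ _ hdir
    have := AffineSubspace.vadd_mem_of_mem_direction h1 hzspan
    simpa [hγ, add_comm] using this
  -- w is in the intrinsic frontier
  have hwf : w ∈ intrinsicFrontier ℝ s := by
    rw [mem_intrinsicFrontier]
    refine ⟨⟨w, hγspan t₀⟩, ?_, rfl⟩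
    rw [frontier_eq_closure_inter_closure]
    constructor
    · exact subset_closure (by simpa using hws)
    · -- approximate from outside
      rw [mem_closure_iff_seq_limit]
      set tk : ℕ → ℝ := fun k => t₀ + (1 - t₀) / (k + 2) with htk
      have htk0 : ∀ k : ℕ, t₀ < tk k := by
        intro k
        have : (0:ℝ) < (1 - t₀) / (k + 2) := by
          apply div_pos (by linarith)
          positivity
        simp [htk]; linarith
      have htk1 : ∀ k : ℕ, tk k ≤ 1 := by
        intro k
        have h2 : (1 - t₀) / (k + 2) ≤ (1 - t₀) / 1 := by
          apply div_le_div_of_nonneg_left (by linarith) one_pos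
          have : (0:ℝ) ≤ (k:ℝ) := Nat.cast_nonneg k
          linarith
        simp [htk]; linarith
      refine ⟨fun k => ⟨γ (tk k), hγspan (tk k)⟩, fun k => ?_, ?_⟩
      · intro hmem
        exact hnotmem (tk k) (htk0 k) (htk1 k) (by simpa using hmem)
      · have hlim : Filter.Tendsto tk Filter.atTop (nhds t₀) := by
          have h1 : Filter.Tendsto (fun k : ℕ => (1 - t₀) / (k + 2)) Filter.atTop (nhds 0) := by
            apply Filter.Tendsto.div_atTop tendsto_const_nhds
            exact Filter.tendsto_atTop_add_const_right _ 2 tendsto_natCast_atTop_atTop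
          have := h1.const_add t₀
          simpa [htk] using this
        refine tendsto_subtype_rng.mpr ?_
        show Filter.Tendsto (fun k => γ (tk k)) Filter.atTop (nhds w)
        rw [hw]
        have := Filter.Tendsto.comp (hγcont.tendsto t₀) hlim
        exact this
  -- contradiction via distance
  have hd := hdeep w hwf
  have hdzw : dist z w = t₀ * ‖y - z‖ := by
    rw [hw, hγ, dist_eq_norm]
    have heq : z - (z + t₀ • (y - z)) = -(t₀ • (y - z)) := by abel
    rw [heq, norm_neg, norm_smul, Real.norm_eq_abs, abs_of_nonneg ht₀S.1.1]
  have hyznorm : 0 < ‖y - z‖ := by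
    rw [norm_pos_iff]; exact sub_ne_zero.2 hyz
  have hlt : t₀ * ‖y - z‖ < ‖y - z‖ := by nlinarith
  have hle : ‖y - z‖ ≤ ρ := by rwa [dist_eq_norm] at hdist
  rw [hdzw] at hd
  linarith

lemma erode {X Y : Set (Vec T)} {V : AffineSubspace ℝ (Vec T)}
    (hYc : IsCompact Y) (hYconv : Convex ℝ Y) (hYV : Y ⊆ (V : Set (Vec T)))
    {z : Vec T} {ρ D : ℝ} (hD : 0 ≤ D)
    (hballX : ∀ p, p ∈ (V : Set (Vec T)) → dist p z ≤ ρ → p ∈ X)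
    (hXY : ∀ x ∈ X, ∃ q ∈ Y, dist x q ≤ D)
    {y : Vec T} (hyV : y ∈ V) (hy : dist y z ≤ ρ - D) : y ∈ Y := by
  by_contra hyY
  have hyX : y ∈ X := hballX y hyV (by linarith)
  obtain ⟨q₀, hq₀Y, _⟩ := hXY y hyX
  have hYne : Y.Nonempty := ⟨q₀, hq₀Y⟩
  obtain ⟨c₀, hc₀Y, hc₀d⟩ := hYc.exists_infDist_eq_dist hYne y
  have hproj : ‖y - c₀‖ = ⨅ w : Y, ‖y - (w : Vec T)‖ := by
    have heq : (⨅ w : Y, ‖y - (w : Vec T)‖) = ⨅ w : Y, dist y (w : Vec T) := by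
      congr 1
    rw [heq, ← Metric.infDist_eq_iInf, hc₀d, dist_eq_norm]
  have hobs : ∀ w ∈ Y, ⟪y - c₀, w - c₀⟫ ≤ 0 :=
    (norm_eq_iInf_iff_real_inner_le_zero hYconv hc₀Y).1 hproj
  have hyc₀ : y ≠ c₀ := fun h => hyY (h ▸ hc₀Y)
  have hnorm : 0 < ‖y - c₀‖ := by rw [norm_pos_iff]; exact sub_ne_zero.2 hyc₀
  set φ : Vec T := ‖y - c₀‖⁻¹ • (y - c₀) with hφ
  have hφnorm : ‖φ‖ = 1 := by
    rw [hφ, norm_smul, Real.norm_eq_abs, abs_of_nonneg (by positivity)]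
    field_simp
  have hφdir : φ ∈ V.direction := by
    have h1 : y - c₀ ∈ V.direction := by
      have := AffineSubspace.vsub_mem_direction hyV (hYV hc₀Y)
      simpa using this
    exact Submodule.smul_mem _ _ h1
  set p : Vec T := y + D • φ with hp
  have hpV : p ∈ V := by
    have := AffineSubspace.vadd_mem_of_mem_direction (Submodule.smul_mem _ D hφdir) hyV
    simpa [hp, add_comm] using this
  have hpz : dist p z ≤ ρ := by
    calc dist p z ≤ dist p y + dist y z := dist_triangle p y z
      _ ≤ D + (ρ - D) := by
          apply add_le_add _ hy
          rw [hp, dist_eq_norm]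
          simp only [add_sub_cancel_left]
          rw [norm_smul, Real.norm_eq_abs, abs_of_nonneg hD, hφnorm, mul_one]
      _ = ρ := by ring
  obtain ⟨q, hqY, hpq⟩ := hXY p (hballX p hpV hpz)
  have h1 : ⟪φ, p - q⟫ ≤ D := by
    calc ⟪φ, p - q⟫ ≤ ‖φ‖ * ‖p - q‖ := real_inner_le_norm φ (p - q)
      _ = ‖p - q‖ := by rw [hφnorm, one_mul]
      _ ≤ D := by rwa [← dist_eq_norm]
  have h2 : ⟪φ, y - c₀⟫ = ‖y - c₀‖ := by
    rw [hφ, real_inner_smul_left, real_inner_self_eq_norm_sq]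
    field_simp
  have h3 : ⟪φ, q - c₀⟫ ≤ 0 := by
    have := hobs q hqY
    rw [hφ, real_inner_smul_left]
    have hinv : (0:ℝ) ≤ ‖y - c₀‖⁻¹ := by positivity
    exact mul_nonpos_of_nonneg_of_nonpos hinv this
  have h4 : ⟪φ, φ⟫ = 1 := by
    rw [real_inner_self_eq_norm_sq, hφnorm]; norm_num
  have h5 : (p : Vec T) - q = (y - c₀) + D • φ + (c₀ - q) := by
    rw [hp]; abel
  have h6 : ⟪φ, p - q⟫ = ⟪φ, y - c₀⟫ + D * ⟪φ, φ⟫ + ⟪φ, c₀ - q⟫ := by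
    rw [h5, inner_add_right, inner_add_right, real_inner_smul_right]
  have h7 : ⟪φ, c₀ - q⟫ = -⟪φ, q - c₀⟫ := by
    rw [show c₀ - q = -(q - c₀) by abel, inner_neg_right]
  rw [h6, h7, h2, h4] at h1
  have : ‖y - c₀‖ ≤ 0 := by linarith
  linarith

lemma smul_sum_mem_affine {α : Type*} {V : AffineSubspace ℝ (Vec T)} {s : Finset α}
    (hs : s.Nonempty) {p : α → Vec T} (hp : ∀ a ∈ s, p a ∈ V) :
    (1 / (s.card : ℝ)) • ∑ a ∈ s, p a ∈ V := by
  obtain ⟨a₀, ha₀⟩ := hs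
  have hcard : (0:ℝ) < (s.card : ℝ) := by
    have := Finset.card_pos.2 ⟨a₀, ha₀⟩
    exact_mod_cast this
  have h1 : (1/(s.card:ℝ)) • ∑ a ∈ s, p a
      = (1/(s.card:ℝ)) • (∑ a ∈ s, (p a - p a₀)) + p a₀ := by
    rw [Finset.sum_sub_distrib, smul_sub, Finset.sum_const,
      ← Nat.cast_smul_eq_nsmul ℝ s.card (p a₀), smul_smul]
    have : 1 / (s.card:ℝ) * (s.card:ℝ) = 1 := by field_simp
    rw [this, one_smul]
    abel
  rw [h1]
  have hdir : (1/(s.card:ℝ)) • (∑ a ∈ s, (p a - p a₀)) ∈ V.direction := by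
    apply Submodule.smul_mem
    apply Submodule.sum_mem
    intro a ha
    have := AffineSubspace.vsub_mem_direction (hp a ha) (hp a₀ ha₀)
    simpa using this
  have := AffineSubspace.vadd_mem_of_mem_direction hdir (hp a₀ ha₀)
  simpa [add_comm] using this

lemma exists_subdiff_dir {φ : Vec T → ℝ} (hconv : ConvexOn ℝ Set.univ φ)
    {L : ℝ} (hLip : ∀ u u', |φ u - φ u'| ≤ L * ‖u - u'‖)
    (x e : Vec T) {c : ℝ}
    (hc : ∀ t : ℝ, 0 < t → c ≤ (φ (x + t • e) - φ x) / t) :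
    ∃ g ∈ subdiff φ x, c ≤ ⟪g, e⟫ := by
  set q : Vec T → ℝ → ℝ := fun v t => (φ (x + t • v) - φ x) / t with hqdef
  have hqmono : ∀ v, ∀ s t : ℝ, 0 < s → s ≤ t → q v s ≤ q v t := by
    intro v s t hs hst
    have ht : 0 < t := lt_of_lt_of_le hs hst
    have hst' : s / t ≤ 1 := by rw [div_le_one ht]; exact hst
    have hcomb : x + s • v = (1 - s/t) • x + (s/t) • (x + t • v) := by
      have h1 : (s/t) • (t • v) = s • v := by
        rw [smul_smul]; congr 1; field_simp
      rw [smul_add, h1, sub_smul, one_smul]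
      abel
    have h2 := hconv.2 (Set.mem_univ x) (Set.mem_univ (x + t • v))
      (by linarith : (0:ℝ) ≤ 1 - s/t) (by positivity : (0:ℝ) ≤ s/t) (by ring)
    rw [← hcomb] at h2
    simp only [smul_eq_mul] at h2
    have h3 : φ (x + s • v) - φ x ≤ (s/t) * (φ (x + t • v) - φ x) := by nlinarith
    show (φ (x + s • v) - φ x) / s ≤ (φ (x + t • v) - φ x) / t
    rw [div_le_div_iff₀ hs ht]
    have h4 : (s/t) * (φ (x + t • v) - φ x) * t = s * (φ (x + t • v) - φ x) := by
      field_simp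
    nlinarith
  have hqlb : ∀ v, ∀ t : ℝ, 0 < t → -(L * ‖v‖) ≤ q v t := by
    intro v t ht
    have h1 := (abs_le.1 (hLip (x + t • v) x)).1
    have h2 : ‖x + t • v - x‖ = t * ‖v‖ := by
      rw [add_sub_cancel_left, norm_smul, Real.norm_eq_abs, abs_of_pos ht]
    rw [h2] at h1
    show -(L * ‖v‖) ≤ (φ (x + t • v) - φ x) / t
    rw [le_div_iff₀ ht]
    nlinarith
  set p : Vec T → ℝ := fun v => sInf (q v '' Set.Ioi 0) with hpdef
  have hpne : ∀ v : Vec T, (q v '' Set.Ioi 0).Nonempty :=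
    fun v => ⟨q v 1, 1, by norm_num, rfl⟩
  have hpbdd : ∀ v : Vec T, BddBelow (q v '' Set.Ioi 0) := by
    intro v
    refine ⟨-(L * ‖v‖), ?_⟩
    rintro y ⟨t, ht, rfl⟩
    exact hqlb v t ht
  have hple : ∀ (v : Vec T) (t : ℝ), 0 < t → p v ≤ q v t :=
    fun v t ht => csInf_le (hpbdd v) ⟨t, ht, rfl⟩
  have hlep : ∀ (v : Vec T) (b : ℝ), (∀ t : ℝ, 0 < t → b ≤ q v t) → b ≤ p v := by
    intro v b hb
    apply le_csInf (hpne v)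
    rintro y ⟨t, ht, rfl⟩
    exact hb t ht
  have hq0 : ∀ t : ℝ, 0 < t → q (0 : Vec T) t = 0 := by
    intro t ht; simp [hqdef]
  have hp0 : p 0 = 0 := by
    refine le_antisymm ?_ (hlep 0 0 (fun t ht => le_of_eq (hq0 t ht).symm))
    have := hple 0 1 one_pos
    rwa [hq0 1 one_pos] at this
  have hqscale : ∀ (a : ℝ), 0 < a → ∀ (v : Vec T) (t : ℝ), 0 < t →
      q (a • v) t = a * q v (t * a) := by
    intro a ha v t ht
    show (φ (x + t • a • v) - φ x) / t = a * ((φ (x + (t * a) • v) - φ x) / (t * a))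
    rw [smul_smul]
    field_simp
  have hphalf : ∀ (a : ℝ), 0 < a → ∀ v : Vec T, a * p v ≤ p (a • v) := by
    intro a ha v
    apply hlep
    intro t ht
    rw [hqscale a ha v t ht]
    have h1 := hple v (t * a) (by positivity)
    nlinarith [mul_le_mul_of_nonneg_left h1 ha.le]
  have hpscale : ∀ (a : ℝ), 0 < a → ∀ v : Vec T, p (a • v) = a * p v := by
    intro a ha v
    refine le_antisymm ?_ (hphalf a ha v)
    have h1 := hphalf a⁻¹ (by positivity) (a • v)
    rw [smul_smul, inv_mul_cancel₀ (ne_of_gt ha), one_smul] at h1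
    have h2 : a * a⁻¹ = 1 := mul_inv_cancel₀ (ne_of_gt ha)
    have h4 := mul_le_mul_of_nonneg_left h1 ha.le
    rwa [← mul_assoc, h2, one_mul] at h4
  have hpadd : ∀ v w : Vec T, p (v + w) ≤ p v + p w := by
    intro v w
    apply le_of_forall_pos_le_add
    intro ε hε
    obtain ⟨y1, hy1mem, hy1lt⟩ := Real.lt_sInf_add_pos (hpne v) (half_pos hε)
    obtain ⟨t1, ht1, rfl⟩ := hy1mem
    obtain ⟨y2, hy2mem, hy2lt⟩ := Real.lt_sInf_add_pos (hpne w) (half_pos hε)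
    obtain ⟨t2, ht2, rfl⟩ := hy2mem
    set t : ℝ := min t1 t2 with htdef
    have ht : 0 < t := lt_min (Set.mem_Ioi.1 ht1) (Set.mem_Ioi.1 ht2)
    have hmid : q (v + w) (t/2) ≤ q v t + q w t := by
      have hcomb : x + (t/2) • (v + w)
          = (1/2 : ℝ) • (x + t • v) + (1/2 : ℝ) • (x + t • w) := by
        module
      have h2 := hconv.2 (Set.mem_univ (x + t • v)) (Set.mem_univ (x + t • w))
        (by norm_num : (0:ℝ) ≤ 1/2) (by norm_num : (0:ℝ) ≤ 1/2) (by norm_num)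
      rw [← hcomb] at h2
      simp only [smul_eq_mul] at h2
      show (φ (x + (t/2) • (v + w)) - φ x) / (t/2)
          ≤ (φ (x + t • v) - φ x) / t + (φ (x + t • w) - φ x) / t
      rw [← add_div, div_le_div_iff₀ (by positivity) ht]
      nlinarith
    calc p (v + w) ≤ q (v + w) (t/2) := hple _ _ (by positivity)
      _ ≤ q v t + q w t := hmid
      _ ≤ q v t1 + q w t2 := add_le_add
          (hqmono v t t1 ht (min_le_left _ _)) (hqmono w t t2 ht (min_le_right _ _))
      _ ≤ (p v + ε/2) + (p w + ε/2) := add_le_add hy1lt.le hy2lt.le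
      _ = p v + p w + ε := by ring
  have hsubdiff_of_le : ∀ g₀ : Vec T →ₗ[ℝ] ℝ, (∀ v, g₀ v ≤ p v) →
      ((InnerProductSpace.toDual ℝ (Vec T)).symm
        ⟨g₀, g₀.continuous_of_finiteDimensional⟩) ∈ subdiff φ x := by
    intro g₀ hg₀le
    intro y
    have hGv : ⟪(InnerProductSpace.toDual ℝ (Vec T)).symm
        ⟨g₀, g₀.continuous_of_finiteDimensional⟩, y - x⟫ = g₀ (y - x) := by
      rw [InnerProductSpace.toDual_symm_apply]
      rfl
    rw [hGv]
    have h1 := hg₀le (y - x)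
    have h2 : p (y - x) ≤ φ y - φ x := by
      have h3 := hple (y - x) 1 one_pos
      have h4 : q (y - x) 1 = φ y - φ x := by
        show (φ (x + (1:ℝ) • (y - x)) - φ x) / 1 = φ y - φ x
        rw [one_smul, div_one]
        congr 2
        abel
      rwa [h4] at h3
    linarith
  by_cases he : e = 0
  · obtain ⟨g, hg⟩ := exists_subdiff hconv (lipschitz_continuous hLip) x
    refine ⟨g, hg, ?_⟩
    have h1 := hc 1 one_pos
    rw [he]
    rw [he] at h1
    simp only [smul_zero, add_zero, sub_self, zero_div] at h1
    rw [inner_zero_right]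
    exact h1
  · -- partial linear map on the span of e
    have hme : e ∈ Submodule.span ℝ ({e} : Set (Vec T)) := Submodule.mem_span_singleton_self e
    have hH : ∀ a : ℝ, a • e = 0 → a • (p e) = 0 := by
      intro a ha
      have : a = 0 := by
        by_contra hne
        exact he (by simpa [smul_smul, inv_mul_cancel₀ hne] using congrArg (a⁻¹ • ·) ha)
      simp [this]
    set f0 : (Vec T) →ₗ.[ℝ] ℝ := LinearPMap.mkSpanSingleton' e (p e) hH with hf0def
    have hf0dom : ∀ v : Vec T, v ∈ f0.domain ↔ v ∈ Submodule.span ℝ ({e} : Set (Vec T)) := by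
      intro v
      rw [hf0def, LinearPMap.domain_mkSpanSingleton]
    have hpe_neg : -(p (-e)) ≤ p e := by
      have h1 : p 0 ≤ p e + p (-e) := by
        have := hpadd e (-e)
        simpa using this
      rw [hp0] at h1
      linarith
    have hf0le : ∀ z : f0.domain, f0 z ≤ p z := by
      rintro ⟨z, hz⟩
      have hz' : z ∈ Submodule.span ℝ ({e} : Set (Vec T)) := (hf0dom z).1 hz
      rcases Submodule.mem_span_singleton.1 hz' with ⟨a, rfl⟩
      have happ : f0 ⟨a • e, hz⟩ = a • (p e) := LinearPMap.mkSpanSingleton'_apply e (p e) hH a _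
      rw [happ, smul_eq_mul]
      show a * p e ≤ p (a • e)
      rcases lt_trichotomy a 0 with ha | ha | ha
      · have hnegae : a • e = (-a) • (-e) := by rw [smul_neg, neg_smul, neg_neg]
        rw [hnegae, hpscale (-a) (by linarith) (-e)]
        have h5 : -(p (-e)) ≤ p e := hpe_neg
        nlinarith
      · simp [ha, hp0]
      · rw [hpscale a ha]
    obtain ⟨g₀, hg₀f, hg₀le⟩ := exists_extension_of_le_sublinear f0 p
      (fun a ha v => hpscale a ha v) hpadd hf0le
    have hg₀e : g₀ e = p e := by
      have h6 := hg₀f ⟨e, (hf0dom e).2 hme⟩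
      have h7 : f0 ⟨e, (hf0dom e).2 hme⟩ = p e :=
        LinearPMap.mkSpanSingleton'_apply_self e (p e) hH _
      rw [h7] at h6
      exact h6
    refine ⟨(InnerProductSpace.toDual ℝ (Vec T)).symm
      ⟨g₀, g₀.continuous_of_finiteDimensional⟩, hsubdiff_of_le g₀ hg₀le, ?_⟩
    have hGe : ⟪(InnerProductSpace.toDual ℝ (Vec T)).symm
        ⟨g₀, g₀.continuous_of_finiteDimensional⟩, e⟫ = g₀ e := by
      rw [InnerProductSpace.toDual_symm_apply]
      rfl
    rw [hGe, hg₀e]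
    exact hlep e c hc

lemma retract_mem {C : Set (Vec T)} {V : AffineSubspace ℝ (Vec T)} (hCconv : Convex ℝ C)
    {zc : Vec T} {r : ℝ}
    (hdeep : ∀ p ∈ (V : Set (Vec T)), dist p zc ≤ r → p ∈ C)
    {q : Vec T} (hq : q ∈ C) (hqV : C ⊆ (V : Set (Vec T)))
    {w : Vec T} (hwV : w ∈ (V : Set (Vec T)))
    {Dd lam : ℝ} (hwq : dist w q ≤ Dd) (hlam0 : 0 ≤ lam) (hlam1 : lam ≤ 1)
    (hr : 0 ≤ r) (hkey : (1 - lam) * Dd ≤ lam * r) (hzcC : zc ∈ C) :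
    (1 - lam) • w + lam • zc ∈ C := by
  have hDd0 : 0 ≤ Dd := le_trans dist_nonneg hwq
  rcases eq_or_lt_of_le hlam0 with h0 | hpos
  · -- lam = 0 forces Dd ≤ 0, hence w = q ∈ C
    have hlam : lam = 0 := h0.symm
    have hD0' : Dd ≤ 0 := by
      rw [hlam] at hkey; linarith
    have hwq0 : dist w q = 0 := le_antisymm (le_trans hwq hD0') dist_nonneg
    have hw : w = q := by rwa [dist_eq_zero] at hwq0
    rw [hlam, hw]
    simpa using hq
  · set e : Vec T := w - q with hedef
    have henorm : ‖e‖ ≤ Dd := by rw [hedef, ← dist_eq_norm]; exact hwq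
    set u : Vec T := zc + (lam⁻¹ * (1 - lam)) • e with hudef
    have heD : e ∈ V.direction := by
      have := AffineSubspace.vsub_mem_direction hwV (hqV hq)
      simpa [hedef] using this
    have huV : u ∈ (V : Set (Vec T)) := by
      have h1 := AffineSubspace.vadd_mem_of_mem_direction
        (Submodule.smul_mem _ (lam⁻¹ * (1 - lam)) heD) (hqV hzcC)
      simpa [hudef, add_comm] using h1
    have hud : dist u zc ≤ r := by
      rw [hudef, dist_eq_norm]
      have h1 : zc + (lam⁻¹ * (1 - lam)) • e - zc = (lam⁻¹ * (1 - lam)) • e := by abel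
      have hnn : 0 ≤ lam⁻¹ * (1 - lam) :=
        mul_nonneg (inv_nonneg.mpr hlam0) (by linarith)
      rw [h1, norm_smul, Real.norm_eq_abs, abs_of_nonneg hnn]
      have h2 : lam⁻¹ * (1 - lam) * ‖e‖ ≤ lam⁻¹ * (1 - lam) * Dd :=
        mul_le_mul_of_nonneg_left henorm hnn
      have h3 : lam⁻¹ * (1 - lam) * Dd ≤ r := by
        rw [mul_assoc, inv_mul_le_iff₀ hpos]
        calc (1 - lam) * Dd ≤ lam * r := hkey
          _ = lam * r := rfl
      linarith
    have huC : u ∈ C := hdeep u huV hud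
    have hc : lam * (lam⁻¹ * (1 - lam)) = 1 - lam := by field_simp
    have heq : (1 - lam) • q + lam • u = (1 - lam) • w + lam • zc := by
      calc (1 - lam) • q + lam • (zc + (lam⁻¹ * (1 - lam)) • e)
          = (1 - lam) • q + lam • zc + (lam * (lam⁻¹ * (1 - lam))) • e := by
            rw [smul_add, smul_smul]; abel
        _ = (1 - lam) • q + lam • zc + (1 - lam) • e := by rw [hc]
        _ = (1 - lam) • (q + e) + lam • zc := by rw [smul_add]; abel
        _ = (1 - lam) • w + lam • zc := by
            rw [show q + e = w from by rw [hedef]; abel]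
    rw [← heq]
    exact hCconv hq huC (by linarith) hlam0 (by ring)

end Helpers

set_option maxHeartbeats 2000000 in
/-- aggregate bound between the SVWE of the auxiliary population game and a
VNE of the original atomic game, under aggregative strong monotonicity. -/
theorem aux_svwe_close_to_vne_aggregative (N T : ℕ) (hN : 0 < N) (hT : 0 < T)
    (R : ℝ) (hR : 0 < R)
    (f : Fin N → Vec T → Vec T → ℝ)
    (hjconv : ∀ n, ConvexOn ℝ Set.univ (fun p : Vec T × Vec T => f n p.1 p.2))
    (L₂ : ℝ) (hL₂ : 0 < L₂)
    (hLip₂ : ∀ n u v w, |f n u v - f n u w| ≤ L₂ * ‖v - w‖)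
    (Xset : Fin N → Set (Vec T))
    (hXne : ∀ n, (Xset n).Nonempty) (hXconv : ∀ n, Convex ℝ (Xset n))
    (hXcomp : ∀ n, IsCompact (Xset n)) (hXbd : ∀ n, ∀ x ∈ Xset n, ‖x‖ ≤ R)
    (A : Set (Vec T)) (hAne : A.Nonempty) (hAcl : IsClosed A) (hAconv : Convex ℝ A)
    (I : Type) [Fintype I] [DecidableEq I] (cl : Fin N → I) (hcl : Function.Surjective cl)
    (Yset : I → Set (Vec T))
    (hYne : ∀ i, (Yset i).Nonempty) (hYconv : ∀ i, Convex ℝ (Yset i))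
    (hYcomp : ∀ i, IsCompact (Yset i)) (hYbd : ∀ i, ∀ y ∈ Yset i, ‖y‖ ≤ R)
    (F : I → Vec T → Vec T → ℝ)
    (hFconv : ∀ i v, ConvexOn ℝ Set.univ (fun u => F i u v))
    (D Df : ℝ)
    (hspan : ∀ n, affineSpan ℝ (Xset n) = affineSpan ℝ (Yset (cl n)))
    (hhaus : ∀ n, Metric.hausdorffDist (Xset n) (Yset (cl n)) ≤ D)
    (hsubgrad : ∀ n, ∀ u ∈ Yset (cl n), ∀ v : Vec T, ‖v‖ ≤ R →
      Metric.hausdorffDist (subdiff (fun y => F (cl n) y v) u)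
        (subdiff (fun y => f n y v) u) ≤ Df)
    (ρ : ℝ) (hρ : 0 < ρ) (z : Profile N T) (hz : z ∈ XA Xset A)
    (hzint : ∀ n, ∀ w ∈ intrinsicFrontier ℝ (Xset n), ρ ≤ dist (z n) w)
    (hDρ : D < ρ / 2)
    (L₁ : ℝ) (hL₁ : 0 < L₁)
    (hfLip : ∀ n (v : Vec T), ‖v‖ ≤ R → ∀ u u', |f n u v - f n u' v| ≤ L₁ * ‖u - u'‖)
    (hFbound : ∀ i, ∀ u ∈ Yset i, ∀ v : Vec T, ‖v‖ ≤ R →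
      ∀ h ∈ subdiff (fun y => F i y v) u, ‖h‖ ≤ L₁)
    (β : ℝ) (hβ : 0 < β)
    (hmono : ∀ x y : Profile N T, (∀ n, ‖x n‖ ≤ R) → (∀ n, ‖y n‖ ≤ R) →
      ∀ g ∈ Phi f x, ∀ h ∈ Phi f y, (N : ℝ) * β * ‖avg x - avg y‖ ^ 2 ≤ ⟪g - h, x - y⟫)
    (xI : I → Vec T) (hxI : xI ∈ XIA cl Yset A)
    (hI : I → Vec T)
    (hhI : ∀ i, hI i ∈ subdiff (fun u => F i u (avgI cl xI)) (xI i))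
    (hSVWEI : ∀ y ∈ XIA cl Yset A, 0 ≤ ∑ i, (clCard cl i : ℝ) * ⟪hI i, y i - xI i⟫)
    (xhat : Profile N T) (hxhat : xhat ∈ XA Xset A)
    (ghat : Profile N T) (hghat : ghat ∈ PhiHat f xhat)
    (hVNE : ∀ x ∈ XA Xset A, 0 ≤ ⟪ghat, x - xhat⟫)
    (K : ℝ) (hK : K = 2 * R * (3 * L₁ * D / ρ + Df)) :
    ‖avgI cl xI - avg xhat‖ ≤ Real.sqrt (2 * R * L₂ / (β * N)) + Real.sqrt (K / β) := by
  have hNR : (0:ℝ) < N := by exact_mod_cast hN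
  have n₀ : Fin N := ⟨0, hN⟩
  have hD0 : 0 ≤ D := le_trans Metric.hausdorffDist_nonneg (hhaus n₀)
  have hDf0 : 0 ≤ Df := by
    obtain ⟨u, hu⟩ := hYne (cl n₀)
    exact le_trans Metric.hausdorffDist_nonneg
      (hsubgrad n₀ u hu 0 (by simpa using hR.le))
  -- fibers
  set fib : I → Finset (Fin N) := fun i => Finset.univ.filter (fun n => cl n = i) with hfibdef
  have hfibcard : ∀ i, clCard cl i = (fib i).card := fun i => rfl
  have hfibmem : ∀ i n, n ∈ fib i ↔ cl n = i := by
    intro i n; simp [hfibdef]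
  have hfibne : ∀ i, (fib i).Nonempty := by
    intro i; obtain ⟨n, hn⟩ := hcl i; exact ⟨n, (hfibmem i n).2 hn⟩
  have hcardpos : ∀ i, 0 < (clCard cl i : ℝ) := by
    intro i
    have h1 := Finset.card_pos.2 (hfibne i)
    rw [hfibcard i]
    exact_mod_cast h1
  have hcardne : ∀ i, (clCard cl i : ℝ) ≠ 0 := fun i => (hcardpos i).ne'
  have hfibsum : ∀ (p : Fin N → Vec T), ∑ n, p n = ∑ i, ∑ n ∈ fib i, p n :=
    fun p => (Finset.sum_fiberwise Finset.univ cl p).symm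
  have hfibsumR : ∀ (p : Fin N → ℝ), ∑ n, p n = ∑ i, ∑ n ∈ fib i, p n :=
    fun p => (Finset.sum_fiberwise Finset.univ cl p).symm
  have hsumcard : ∑ i, (clCard cl i : ℝ) = (N : ℝ) := by
    have h := Finset.card_eq_sum_card_fiberwise (f := cl) (s := Finset.univ)
      (t := Finset.univ) (fun x _ => Finset.mem_univ (cl x))
    rw [Finset.card_univ, Fintype.card_fin] at h
    have h2 : ∑ i, clCard cl i = N := h.symm
    calc ∑ i, (clCard cl i : ℝ) = ((∑ i, clCard cl i : ℕ) : ℝ) := by rw [Nat.cast_sum]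
      _ = (N:ℝ) := by rw [h2]
  -- the symmetric profile
  set xstar : Profile N T := psiMap cl xI with hxstardef
  have hxstarn : ∀ n, xstar n = xI (cl n) := fun n => rfl
  have havgx : avg xstar = avgI cl xI := by
    rw [avg, avgI]
    congr 1
    rw [hfibsum (fun n => xstar n)]
    apply Finset.sum_congr rfl
    intro i _
    have h1 : ∀ n ∈ fib i, xstar n = xI i := by
      intro n hn; rw [hxstarn, (hfibmem i n).1 hn]
    rw [Finset.sum_congr rfl h1, Finset.sum_const, hfibcard, ← Nat.cast_smul_eq_nsmul ℝ]
  -- norm bounds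
  have havgbd : ∀ (x : Profile N T), (∀ n, ‖x n‖ ≤ R) → ‖avg x‖ ≤ R := by
    intro x hx
    rw [avg, norm_smul, Real.norm_eq_abs, abs_of_nonneg (by positivity)]
    calc (1/(N:ℝ)) * ‖∑ n, x n‖ ≤ (1/(N:ℝ)) * ((N:ℝ) * R) := by
          apply mul_le_mul_of_nonneg_left _ (by positivity)
          calc ‖∑ n, x n‖ ≤ ∑ n, ‖x n‖ := norm_sum_le _ _
            _ ≤ ∑ _n : Fin N, R := Finset.sum_le_sum (fun n _ => hx n)
            _ = (N:ℝ) * R := by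
                rw [Finset.sum_const, Finset.card_univ, Fintype.card_fin, nsmul_eq_mul]
      _ = R := by field_simp [hNR.ne']
  have hxhatbd : ∀ n, ‖xhat n‖ ≤ R := fun n => hXbd n _ (hxhat.1 n)
  have hxstarbd : ∀ n, ‖xstar n‖ ≤ R := fun n => hYbd (cl n) _ (hxI.1 (cl n))
  have hzbd : ∀ n, ‖z n‖ ≤ R := fun n => hXbd n _ (hz.1 n)
  have hbarhat : ‖avg xhat‖ ≤ R := havgbd xhat hxhatbd
  have hbarS : ‖avgI cl xI‖ ≤ R := by rw [← havgx]; exact havgbd xstar hxstarbd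
  have hfibavgbd : ∀ (p : Fin N → Vec T) (i : I), (∀ n, ‖p n‖ ≤ R) →
      ‖(1/(clCard cl i : ℝ)) • ∑ n ∈ fib i, p n‖ ≤ R := by
    intro p i hp
    rw [norm_smul, Real.norm_eq_abs, abs_of_nonneg (by positivity)]
    have hc := hcardpos i
    calc (1/(clCard cl i:ℝ)) * ‖∑ n ∈ fib i, p n‖
        ≤ (1/(clCard cl i:ℝ)) * ((clCard cl i:ℝ) * R) := by
          apply mul_le_mul_of_nonneg_left _ (by positivity)
          calc ‖∑ n ∈ fib i, p n‖ ≤ ∑ n ∈ fib i, ‖p n‖ := norm_sum_le _ _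
            _ ≤ ∑ _n ∈ fib i, R := Finset.sum_le_sum (fun n _ => hp n)
            _ = (clCard cl i:ℝ) * R := by
                rw [Finset.sum_const, hfibcard, nsmul_eq_mul]
      _ = R := by field_simp [hcardne i]
  -- deep ball property of Xset n around z n
  have hBall : ∀ n, ∀ p ∈ (affineSpan ℝ (Xset n) : Set (Vec T)),
      dist p (z n) ≤ ρ → p ∈ Xset n := by
    intro n p hp hd
    exact deep_ball_subset (hXcomp n).isClosed (hz.1 n) (hzint n) hp hd
  -- Hausdorff transfer
  have hedist : ∀ n, EMetric.hausdorffEdist (Xset n) (Yset (cl n)) ≠ ⊤ := fun n =>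
    Metric.hausdorffEdist_ne_top_of_nonempty_of_bounded (hXne n) (hYne (cl n))
      (hXcomp n).isBounded (hYcomp (cl n)).isBounded
  have hXtoY : ∀ n, ∀ x ∈ Xset n, ∃ q ∈ Yset (cl n), dist x q ≤ D := by
    intro n x hx
    obtain ⟨q, hq, hdq⟩ := (hYcomp (cl n)).exists_infDist_eq_dist (hYne (cl n)) x
    refine ⟨q, hq, ?_⟩
    rw [← hdq]
    exact le_trans (Metric.infDist_le_hausdorffDist_of_mem hx (hedist n)) (hhaus n)
  have hYtoX : ∀ n, ∀ y ∈ Yset (cl n), ∃ p ∈ Xset n, dist y p ≤ D := by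
    intro n y hy
    obtain ⟨p, hp, hdp⟩ := (hXcomp n).exists_infDist_eq_dist (hXne n) y
    refine ⟨p, hp, ?_⟩
    rw [← hdp]
    have h1 : EMetric.hausdorffEdist (Yset (cl n)) (Xset n) ≠ ⊤ := by
      exact fun h => hedist n (EMetric.hausdorffEdist_comm.trans h)
    calc Metric.infDist y (Xset n) ≤ Metric.hausdorffDist (Yset (cl n)) (Xset n) :=
          Metric.infDist_le_hausdorffDist_of_mem hy h1
      _ = Metric.hausdorffDist (Xset n) (Yset (cl n)) := Metric.hausdorffDist_comm
      _ ≤ D := hhaus n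
  have hspanYsub : ∀ n, Yset (cl n) ⊆ (affineSpan ℝ (Xset n) : Set (Vec T)) := by
    intro n; rw [hspan n]; exact subset_affineSpan ℝ _
  have hEY : ∀ n, ∀ p ∈ (affineSpan ℝ (Xset n) : Set (Vec T)),
      dist p (z n) ≤ ρ - D → p ∈ Yset (cl n) := by
    intro n p hp hd
    exact erode (hYcomp (cl n)) (hYconv (cl n)) (hspanYsub n) hD0 (hBall n) (hXtoY n) hp hd
  -- retraction parameters
  set lam1 : ℝ := 2 * D / ρ with hlam1def
  set lam2 : ℝ := D / ρ with hlam2def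
  have hlam10 : 0 ≤ lam1 := by positivity
  have hlam11 : lam1 ≤ 1 := by
    rw [hlam1def, div_le_one hρ]; linarith
  have hlam20 : 0 ≤ lam2 := by positivity
  have hlam21 : lam2 ≤ 1 := by
    rw [hlam2def, div_le_one hρ]; linarith
  -- the retracted feasible atomic profile
  set xp : Profile N T := WithLp.toLp 2 (fun n => (1 - lam1) • xstar n + lam1 • z n) with hxpdef
  have hxpX : ∀ n, xp n ∈ Xset n := by
    intro n
    obtain ⟨q, hqX, hqd⟩ := hYtoX n (xI (cl n)) (hxI.1 (cl n))
    have hwV : xstar n ∈ (affineSpan ℝ (Xset n) : Set (Vec T)) := by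
      rw [hxstarn]; exact hspanYsub n (hxI.1 (cl n))
    have hkey : (1 - lam1) * D ≤ lam1 * ρ := by
      have h1 : lam1 * ρ = 2 * D := by
        rw [hlam1def, div_mul_cancel₀ _ hρ.ne']
      rw [h1]
      nlinarith
    exact retract_mem (hXconv n) (hBall n) hqX
      (fun x hx => subset_affineSpan ℝ _ hx) hwV
      (by rw [hxstarn]; exact hqd) hlam10 hlam11 hρ.le hkey (hz.1 n)
  have havg_comb : ∀ (a b : ℝ) (u v : Profile N T),
      avg (WithLp.toLp 2 (fun n => a • u n + b • v n) : Profile N T) = a • avg u + b • avg v := by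
    intro a b u v
    simp only [avg, PiLp.toLp_apply]
    rw [Finset.sum_add_distrib, ← Finset.smul_sum, ← Finset.smul_sum, smul_add,
      smul_comm (1/(N:ℝ)) a, smul_comm (1/(N:ℝ)) b]
  have havgxp : avg xp = (1 - lam1) • avg xstar + lam1 • avg z := by
    rw [hxpdef]; exact havg_comb _ _ _ _
  have hxpXA : xp ∈ XA Xset A := by
    refine ⟨hxpX, ?_⟩
    rw [havgxp, havgx]
    exact hAconv hxI.2 hz.2 (by linarith) hlam10 (by ring)
  have hxpbd : ∀ n, ‖xp n‖ ≤ R := fun n => hXbd n _ (hxpX n)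
  -- subgradients for xhat, aligned with ghat directions
  have havgOther : ∀ (n : Fin N), avgOther xhat n + (1/(N:ℝ)) • xhat n = avg xhat := by
    intro n
    rw [avgOther, avg, ← smul_add]
    congr 1
    exact Finset.sum_erase_add _ _ (Finset.mem_univ n)
  set ev : Fin N → Vec T := fun n => xp n - xhat n with hevdef
  have hgex : ∀ n : Fin N, ∃ g ∈ subdiff (fun y => f n y (avg xhat)) (xhat n),
      ⟪ghat n, ev n⟫ - L₂ * ((1/(N:ℝ)) * ‖ev n‖) ≤ ⟪g, ev n⟫ := by
    intro n
    apply exists_subdiff_dir (convexOn_slice (hjconv n) (avg xhat))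
      (hfLip n (avg xhat) hbarhat)
    intro t ht
    have hsub := hghat n (xhat n + t • ev n)
    dsimp only at hsub
    rw [add_sub_cancel_left, real_inner_smul_right, havgOther n] at hsub
    have hlip := hLip₂ n (xhat n + t • ev n)
      (avgOther xhat n + (1/(N:ℝ)) • (xhat n + t • ev n)) (avg xhat)
    have hvec : avgOther xhat n + (1/(N:ℝ)) • (xhat n + t • ev n) - avg xhat
        = (1/(N:ℝ)) • (t • ev n) := by
      rw [← havgOther n, smul_add]
      abel
    rw [hvec] at hlip
    have hnv : ‖(1/(N:ℝ)) • (t • ev n)‖ = (1/(N:ℝ)) * (t * ‖ev n‖) := by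
      rw [norm_smul, norm_smul, Real.norm_eq_abs, Real.norm_eq_abs,
        abs_of_nonneg (by positivity : (0:ℝ) ≤ 1/(N:ℝ)), abs_of_pos ht]
    rw [hnv] at hlip
    have habs := (abs_le.1 hlip).2
    rw [le_div_iff₀ ht]
    nlinarith
  choose g hgmem hgdir using hgex
  set gP : Profile N T := WithLp.toLp 2 (fun n => g n) with hgPdef
  have hgPmem : gP ∈ Phi f xhat := fun n => hgmem n
  have hgPbd : ∀ n, ‖gP n‖ ≤ L₁ :=
    fun n => subdiff_norm_le hL₁.le (hfLip n (avg xhat) hbarhat) (hgmem n)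
  -- subgradients for xstar close to hI
  have hhex : ∀ n : Fin N, ∃ hn : Vec T,
      hn ∈ subdiff (fun y => f n y (avgI cl xI)) (xI (cl n)) ∧ dist (hI (cl n)) hn ≤ Df := by
    intro n
    set Sf : Set (Vec T) := subdiff (fun y => f n y (avgI cl xI)) (xI (cl n)) with hSfdef
    have hSfne : Sf.Nonempty := exists_subdiff (convexOn_slice (hjconv n) (avgI cl xI))
      (lipschitz_continuous (hfLip n (avgI cl xI) hbarS)) (xI (cl n))
    have hSfbd : Bornology.IsBounded Sf := by
      apply Bornology.IsBounded.subset (Metric.isBounded_closedBall (x := (0 : Vec T)) (r := L₁))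
      intro gg hgg
      rw [Metric.mem_closedBall, dist_zero_right]
      exact subdiff_norm_le hL₁.le (hfLip n (avgI cl xI) hbarS) hgg
    set SF : Set (Vec T) := subdiff (fun y => F (cl n) y (avgI cl xI)) (xI (cl n)) with hSFdef
    have hSFne : SF.Nonempty := ⟨hI (cl n), hhI (cl n)⟩
    have hSFbd : Bornology.IsBounded SF := by
      apply Bornology.IsBounded.subset (Metric.isBounded_closedBall (x := (0 : Vec T)) (r := L₁))
      intro gg hgg
      rw [Metric.mem_closedBall, dist_zero_right]
      exact hFbound (cl n) _ (hxI.1 (cl n)) _ hbarS gg hgg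
    have hfin : EMetric.hausdorffEdist SF Sf ≠ ⊤ :=
      Metric.hausdorffEdist_ne_top_of_nonempty_of_bounded hSFne hSfne hSFbd hSfbd
    have h1 : Metric.infDist (hI (cl n)) Sf ≤ Df :=
      le_trans (Metric.infDist_le_hausdorffDist_of_mem (hhI (cl n)) hfin)
        (hsubgrad n (xI (cl n)) (hxI.1 (cl n)) (avgI cl xI) hbarS)
    have hSfcomp : IsCompact Sf :=
      Metric.isCompact_of_isClosed_isBounded (subdiff_isClosed _ _) hSfbd
    obtain ⟨hn, hhn, hdn⟩ := hSfcomp.exists_infDist_eq_dist hSfne (hI (cl n))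
    exact ⟨hn, hhn, by rw [← hdn]; exact h1⟩
  choose hv hvmem hvdist using hhex
  set hP : Profile N T := WithLp.toLp 2 (fun n => hv n) with hhPdef
  have hhPmem : hP ∈ Phi f xstar := by
    intro n
    show hv n ∈ subdiff (fun y => f n y (avg xstar)) (xstar n)
    rw [havgx, hxstarn]
    exact hvmem n
  -- monotonicity
  have hmain := hmono xhat xstar hxhatbd hxstarbd gP hgPmem hP hhPmem
  -- inner product expansion
  have hinner : ⟪gP - hP, xhat - xstar⟫
      = (∑ n, ⟪gP n, xhat n - xp n⟫) + (∑ n, ⟪gP n, xp n - xstar n⟫)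
        + ∑ n, ⟪hP n, xstar n - xhat n⟫ := by
    rw [PiLp.inner_apply, ← Finset.sum_add_distrib, ← Finset.sum_add_distrib]
    apply Finset.sum_congr rfl
    intro n _
    have h1 : (gP - hP) n = gP n - hP n := rfl
    have h2 : (xhat - xstar) n = xhat n - xstar n := rfl
    rw [h1, h2, inner_sub_left]
    have h3 : ⟪gP n, xhat n - xstar n⟫ = ⟪gP n, xhat n - xp n⟫ + ⟪gP n, xp n - xstar n⟫ := by
      rw [← inner_add_right]
      congr 1
      abel
    have h4 : ⟪hP n, xhat n - xstar n⟫ = -⟪hP n, xstar n - xhat n⟫ := by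
      rw [show xhat n - xstar n = -(xstar n - xhat n) from by abel, inner_neg_right]
    rw [h3, h4]
    ring
  -- TERM 1
  have hterm1 : (∑ n, ⟪gP n, xhat n - xp n⟫) ≤ 2 * R * L₂ := by
    have hevbd : ∀ n, ‖ev n‖ ≤ 2 * R := by
      intro n
      rw [hevdef]
      calc ‖xp n - xhat n‖ ≤ ‖xp n‖ + ‖xhat n‖ := norm_sub_le _ _
        _ ≤ 2*R := by have := hxpbd n; have := hxhatbd n; linarith
    have hA : ∀ n : Fin N, ⟪gP n, xhat n - xp n⟫
        ≤ -⟪ghat n, ev n⟫ + L₂ * ((1/(N:ℝ)) * (2*R)) := by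
      intro n
      have h1 := hgdir n
      have h2 : ⟪gP n, xhat n - xp n⟫ = -⟪gP n, ev n⟫ := by
        rw [hevdef, show xhat n - xp n = -(xp n - xhat n) from by abel, inner_neg_right]
      rw [h2]
      have h3 : L₂ * ((1/(N:ℝ)) * ‖ev n‖) ≤ L₂ * ((1/(N:ℝ)) * (2*R)) := by
        apply mul_le_mul_of_nonneg_left _ hL₂.le
        apply mul_le_mul_of_nonneg_left (hevbd n) (by positivity)
      linarith
    have hVNE2 : 0 ≤ ∑ n, ⟪ghat n, ev n⟫ := by
      have h0 := hVNE xp hxpXA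
      rw [PiLp.inner_apply] at h0
      convert h0 using 2 with n
      simp [hevdef]
    calc (∑ n, ⟪gP n, xhat n - xp n⟫)
        ≤ ∑ n, (-⟪ghat n, ev n⟫ + L₂ * ((1/(N:ℝ)) * (2*R))) :=
          Finset.sum_le_sum (fun n _ => hA n)
      _ = -(∑ n, ⟪ghat n, ev n⟫) + (N:ℝ) * (L₂ * ((1/(N:ℝ)) * (2*R))) := by
          rw [Finset.sum_add_distrib, Finset.sum_neg_distrib, Finset.sum_const,
            Finset.card_univ, Fintype.card_fin, nsmul_eq_mul]
      _ ≤ 0 + (N:ℝ) * (L₂ * ((1/(N:ℝ)) * (2*R))) := by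
          apply add_le_add _ le_rfl
          linarith
      _ = 2 * R * L₂ := by field_simp [hNR.ne']; ring
  -- TERM 2
  have hterm2 : (∑ n, ⟪gP n, xp n - xstar n⟫) ≤ (N:ℝ) * (L₁ * (lam1 * (2*R))) := by
    have hA : ∀ n : Fin N, ⟪gP n, xp n - xstar n⟫ ≤ L₁ * (lam1 * (2*R)) := by
      intro n
      have h1 : xp n - xstar n = lam1 • (z n - xstar n) := by
        rw [hxpdef]
        show (1 - lam1) • xstar n + lam1 • z n - xstar n = lam1 • (z n - xstar n)
        rw [sub_smul, one_smul, smul_sub]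
        abel
      have h2 : ‖xp n - xstar n‖ ≤ lam1 * (2*R) := by
        rw [h1, norm_smul, Real.norm_eq_abs, abs_of_nonneg hlam10]
        apply mul_le_mul_of_nonneg_left _ hlam10
        calc ‖z n - xstar n‖ ≤ ‖z n‖ + ‖xstar n‖ := norm_sub_le _ _
          _ ≤ 2*R := by have := hzbd n; have := hxstarbd n; linarith
      calc ⟪gP n, xp n - xstar n⟫ ≤ ‖gP n‖ * ‖xp n - xstar n‖ := real_inner_le_norm _ _
        _ ≤ L₁ * (lam1 * (2*R)) := mul_le_mul (hgPbd n) h2 (norm_nonneg _) hL₁.le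
    calc (∑ n, ⟪gP n, xp n - xstar n⟫) ≤ ∑ _n : Fin N, L₁ * (lam1 * (2*R)) :=
          Finset.sum_le_sum (fun n _ => hA n)
      _ = (N:ℝ) * (L₁ * (lam1 * (2*R))) := by
          rw [Finset.sum_const, Finset.card_univ, Fintype.card_fin, nsmul_eq_mul]
  -- population-side objects
  set yB : I → Vec T := fun i => (1/(clCard cl i : ℝ)) • ∑ n ∈ fib i, xhat n with hyBdef
  set ztil : I → Vec T := fun i => (1/(clCard cl i : ℝ)) • ∑ n ∈ fib i, z n with hztildef
  set yprime : I → Vec T := fun i => (1 - lam2) • yB i + lam2 • ztil i with hyprimedef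
  have hyBsum : ∀ i, (clCard cl i : ℝ) • yB i = ∑ n ∈ fib i, xhat n := by
    intro i
    simp only [hyBdef]
    rw [smul_smul]
    have hc' : (clCard cl i:ℝ) * (1/(clCard cl i:ℝ)) = 1 := mul_one_div_cancel (hcardne i)
    rw [hc', one_smul]
  have hztilsum : ∀ i, (clCard cl i : ℝ) • ztil i = ∑ n ∈ fib i, z n := by
    intro i
    simp only [hztildef]
    rw [smul_smul]
    have hc' : (clCard cl i:ℝ) * (1/(clCard cl i:ℝ)) = 1 := mul_one_div_cancel (hcardne i)
    rw [hc', one_smul]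
  have hVspan : ∀ i, ∀ n ∈ fib i, affineSpan ℝ (Xset n) = affineSpan ℝ (Yset i) := by
    intro i n hn
    rw [hspan n, (hfibmem i n).1 hn]
  have hyBV : ∀ i, yB i ∈ (affineSpan ℝ (Yset i) : Set (Vec T)) := by
    intro i
    simp only [hyBdef]
    rw [hfibcard]
    exact smul_sum_mem_affine (hfibne i) (p := fun n => xhat n) (fun n hn => by
      rw [show affineSpan ℝ (Yset i) = affineSpan ℝ (Xset n) from (hVspan i n hn).symm]
      exact subset_affineSpan ℝ _ (hxhat.1 n))
  have hztilV : ∀ i, ztil i ∈ (affineSpan ℝ (Yset i) : Set (Vec T)) := by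
    intro i
    simp only [hztildef]
    rw [hfibcard]
    exact smul_sum_mem_affine (hfibne i) (p := fun n => z n) (fun n hn => by
      rw [show affineSpan ℝ (Yset i) = affineSpan ℝ (Xset n) from (hVspan i n hn).symm]
      exact subset_affineSpan ℝ _ (hz.1 n))
  -- deep ball property of Yset i around ztil i
  have hdeepY : ∀ i, ∀ p ∈ (affineSpan ℝ (Yset i) : Set (Vec T)),
      dist p (ztil i) ≤ ρ - D → p ∈ Yset i := by
    intro i p hp hd
    have hecard : ‖p - ztil i‖ ≤ ρ - D := by rw [← dist_eq_norm]; exact hd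
    have hmem : ∀ n ∈ fib i, z n + (p - ztil i) ∈ Yset i := by
      intro n hn
      have hcln : cl n = i := (hfibmem i n).1 hn
      have heD : p - ztil i ∈ (affineSpan ℝ (Yset i)).direction := by
        have := AffineSubspace.vsub_mem_direction hp (hztilV i)
        simpa using this
      have hzeV : z n + (p - ztil i) ∈ (affineSpan ℝ (Xset n) : Set (Vec T)) := by
        rw [hVspan i n hn]
        have h1 : z n ∈ affineSpan ℝ (Yset i) := by
          rw [← hVspan i n hn]; exact subset_affineSpan ℝ _ (hz.1 n)
        have := AffineSubspace.vadd_mem_of_mem_direction heD h1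
        simpa [add_comm] using this
      have hdist2 : dist (z n + (p - ztil i)) (z n) ≤ ρ - D := by
        rw [dist_eq_norm]
        simpa using hecard
      have := hEY n (z n + (p - ztil i)) hzeV hdist2
      rwa [hcln] at this
    have hcomb : ∑ n ∈ fib i, (1/(clCard cl i:ℝ)) • (z n + (p - ztil i)) ∈ Yset i := by
      apply Convex.sum_mem (hYconv i)
      · intro n _; positivity
      · rw [Finset.sum_const, nsmul_eq_mul]
        rw [show (((fib i).card : ℕ) : ℝ) = (clCard cl i : ℝ) from by rw [hfibcard]]
        exact mul_one_div_cancel (hcardne i)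
      · exact hmem
    have heq : ∑ n ∈ fib i, (1/(clCard cl i:ℝ)) • (z n + (p - ztil i)) = p := by
      rw [← Finset.smul_sum, Finset.sum_add_distrib, smul_add, Finset.sum_const, hfibcard,
        ← Nat.cast_smul_eq_nsmul ℝ, smul_smul, ← hfibcard]
      have hc' : (1/(clCard cl i:ℝ)) * (clCard cl i:ℝ) = 1 := one_div_mul_cancel (hcardne i)
      rw [hc', one_smul]
      have h2 : (1/(clCard cl i:ℝ)) • ∑ n ∈ fib i, z n = ztil i := by
        simp only [hztildef]
      rw [h2]
      abel
    rwa [heq] at hcomb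
  have hztilY : ∀ i, ztil i ∈ Yset i := by
    intro i
    apply hdeepY i (ztil i) (hztilV i)
    rw [dist_self]
    linarith
  -- yB i is D-close to Yset i
  choose q hqY hqd using fun n => hXtoY n (xhat n) (hxhat.1 n)
  have hqImem : ∀ i, (∑ n ∈ fib i, (1/(clCard cl i:ℝ)) • q n) ∈ Yset i := by
    intro i
    apply Convex.sum_mem (hYconv i)
    · intro n _; positivity
    · rw [Finset.sum_const, nsmul_eq_mul]
      rw [show (((fib i).card : ℕ) : ℝ) = (clCard cl i : ℝ) from by rw [hfibcard]]
      exact mul_one_div_cancel (hcardne i)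
    · intro n hn
      have := hqY n
      rwa [(hfibmem i n).1 hn] at this
  have hyBq : ∀ i, dist (yB i) (∑ n ∈ fib i, (1/(clCard cl i:ℝ)) • q n) ≤ D := by
    intro i
    rw [dist_eq_norm]
    simp only [hyBdef]
    rw [← Finset.smul_sum, ← smul_sub, ← Finset.sum_sub_distrib]
    rw [norm_smul, Real.norm_eq_abs, abs_of_nonneg (by positivity)]
    calc (1/(clCard cl i:ℝ)) * ‖∑ n ∈ fib i, (xhat n - q n)‖
        ≤ (1/(clCard cl i:ℝ)) * ((clCard cl i:ℝ) * D) := by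
          apply mul_le_mul_of_nonneg_left _ (by positivity)
          calc ‖∑ n ∈ fib i, (xhat n - q n)‖ ≤ ∑ n ∈ fib i, ‖xhat n - q n‖ := norm_sum_le _ _
            _ ≤ ∑ _n ∈ fib i, D := Finset.sum_le_sum (fun n _ => by
                rw [← dist_eq_norm]; exact hqd n)
            _ = (clCard cl i:ℝ) * D := by rw [Finset.sum_const, hfibcard, nsmul_eq_mul]
      _ = D := by field_simp [hcardne i]
  -- yprime is feasible
  have hyprimeY : ∀ i, yprime i ∈ Yset i := by
    intro i
    have hkey : (1 - lam2) * D ≤ lam2 * (ρ - D) := by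
      have h1 : lam2 * ρ = D := by rw [hlam2def, div_mul_cancel₀ _ hρ.ne']
      nlinarith
    exact retract_mem (hYconv i) (hdeepY i) (hqImem i)
      (fun x hx => subset_affineSpan ℝ _ hx) (hyBV i) (hyBq i) hlam20 hlam21
      (by linarith) hkey (hztilY i)
  have havgIyB : avgI cl (fun i => yB i) = avg xhat := by
    rw [avgI, avg]
    congr 1
    rw [hfibsum (fun n => xhat n)]
    exact Finset.sum_congr rfl (fun i _ => hyBsum i)
  have havgIztil : avgI cl (fun i => ztil i) = avg z := by
    rw [avgI, avg]
    congr 1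
    rw [hfibsum (fun n => z n)]
    exact Finset.sum_congr rfl (fun i _ => hztilsum i)
  have hyprimeXIA : yprime ∈ XIA cl Yset A := by
    refine ⟨hyprimeY, ?_⟩
    have h1 : avgI cl yprime = (1 - lam2) • avg xhat + lam2 • avg z := by
      rw [← havgIyB, ← havgIztil, avgI, avgI, avgI]
      rw [show (∑ i, (clCard cl i:ℝ) • yprime i)
          = (1-lam2) • (∑ i, (clCard cl i:ℝ) • yB i)
            + lam2 • (∑ i, (clCard cl i:ℝ) • ztil i) from ?_]
      · rw [smul_add, smul_comm (1/(N:ℝ)) (1-lam2), smul_comm (1/(N:ℝ)) lam2]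
      · rw [Finset.smul_sum, Finset.smul_sum, ← Finset.sum_add_distrib]
        apply Finset.sum_congr rfl
        intro i _
        rw [hyprimedef]
        show (clCard cl i:ℝ) • ((1-lam2) • yB i + lam2 • ztil i)
            = (1-lam2) • (clCard cl i:ℝ) • yB i + lam2 • (clCard cl i:ℝ) • ztil i
        rw [smul_add, smul_comm ((clCard cl i:ℝ)) (1-lam2), smul_comm ((clCard cl i:ℝ)) lam2]
    rw [h1]
    exact hAconv hxhat.2 hz.2 (by linarith) hlam20 (by ring)
  -- TERM 3
  have hterm3 : (∑ n, ⟪hP n, xstar n - xhat n⟫)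
      ≤ (N:ℝ) * (L₁ * (lam2 * (2*R))) + (N:ℝ) * (Df * (2*R)) := by
    have hpart2 : ∀ n : Fin N, ⟪hP n - hI (cl n), xstar n - xhat n⟫ ≤ Df * (2*R) := by
      intro n
      calc ⟪hP n - hI (cl n), xstar n - xhat n⟫
          ≤ ‖hP n - hI (cl n)‖ * ‖xstar n - xhat n‖ := real_inner_le_norm _ _
        _ ≤ Df * (2*R) := by
            apply mul_le_mul _ _ (norm_nonneg _) hDf0
            · rw [← dist_eq_norm, dist_comm]
              exact hvdist n
            · calc ‖xstar n - xhat n‖ ≤ ‖xstar n‖ + ‖xhat n‖ := norm_sub_le _ _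
                _ ≤ 2*R := by have := hxstarbd n; have := hxhatbd n; linarith
    have hgroup : (∑ n, ⟪hI (cl n), xstar n - xhat n⟫)
        = - ∑ i, (clCard cl i:ℝ) * ⟪hI i, yB i - xI i⟫ := by
      rw [hfibsumR (fun n => ⟪hI (cl n), xstar n - xhat n⟫)]
      rw [← Finset.sum_neg_distrib]
      apply Finset.sum_congr rfl
      intro i _
      calc ∑ n ∈ fib i, (⟪hI (cl n), xstar n - xhat n⟫ : ℝ)
          = ∑ n ∈ fib i, ((⟪hI i, xI i⟫ : ℝ) - ⟪hI i, xhat n⟫) := by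
            apply Finset.sum_congr rfl
            intro n hn
            rw [hxstarn n, (hfibmem i n).1 hn, inner_sub_right]
        _ = (clCard cl i:ℝ) * ⟪hI i, xI i⟫ - ⟪hI i, ∑ n ∈ fib i, xhat n⟫ := by
            rw [Finset.sum_sub_distrib, Finset.sum_const, hfibcard, nsmul_eq_mul,
              inner_sum]
        _ = -((clCard cl i:ℝ) * ⟪hI i, yB i - xI i⟫) := by
            rw [← hyBsum i, real_inner_smul_right, inner_sub_right]
            ring
    have hSVWE2 := hSVWEI yprime hyprimeXIA
    have hIbd : ∀ i, ‖hI i‖ ≤ L₁ := fun i => hFbound i _ (hxI.1 i) _ hbarS _ (hhI i)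
    have hpart1 : (∑ n, ⟪hI (cl n), xstar n - xhat n⟫) ≤ (N:ℝ) * (L₁ * (lam2 * (2*R))) := by
      rw [hgroup]
      have h4 : ∀ i, (clCard cl i:ℝ) * ⟪hI i, yB i - xI i⟫
          = (clCard cl i:ℝ) * ⟪hI i, yprime i - xI i⟫
            - (clCard cl i:ℝ) * ⟪hI i, yprime i - yB i⟫ := by
        intro i
        have h5 : (⟪hI i, yB i - xI i⟫:ℝ)
            = ⟪hI i, yprime i - xI i⟫ - ⟪hI i, yprime i - yB i⟫ := by
          rw [← inner_sub_right]
          congr 1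
          abel
        rw [h5]; ring
      have h6 : ∀ i, (clCard cl i:ℝ) * ⟪hI i, yprime i - yB i⟫
          ≤ (clCard cl i:ℝ) * (L₁ * (lam2 * (2*R))) := by
        intro i
        apply mul_le_mul_of_nonneg_left _ (hcardpos i).le
        have h3 : yprime i - yB i = lam2 • (ztil i - yB i) := by
          simp only [hyprimedef]
          rw [sub_smul, one_smul, smul_sub]
          abel
        calc (⟪hI i, yprime i - yB i⟫:ℝ) ≤ ‖hI i‖ * ‖yprime i - yB i‖ :=
              real_inner_le_norm _ _
          _ ≤ L₁ * (lam2 * (2*R)) := by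
              apply mul_le_mul (hIbd i) _ (norm_nonneg _) hL₁.le
              rw [h3, norm_smul, Real.norm_eq_abs, abs_of_nonneg hlam20]
              apply mul_le_mul_of_nonneg_left _ hlam20
              have hz1 : ‖ztil i‖ ≤ R := by
                simp only [hztildef]; exact hfibavgbd _ i hzbd
              have hy1 : ‖yB i‖ ≤ R := by
                simp only [hyBdef]; exact hfibavgbd _ i hxhatbd
              calc ‖ztil i - yB i‖ ≤ ‖ztil i‖ + ‖yB i‖ := norm_sub_le _ _
                _ ≤ 2*R := by linarith
      calc -∑ i, (clCard cl i:ℝ) * ⟪hI i, yB i - xI i⟫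
          = -∑ i, (clCard cl i:ℝ) * ⟪hI i, yprime i - xI i⟫
            + ∑ i, (clCard cl i:ℝ) * ⟪hI i, yprime i - yB i⟫ := by
            rw [show (∑ i, (clCard cl i:ℝ) * ⟪hI i, yB i - xI i⟫)
                = (∑ i, (clCard cl i:ℝ) * ⟪hI i, yprime i - xI i⟫)
                  - ∑ i, (clCard cl i:ℝ) * ⟪hI i, yprime i - yB i⟫ from by
              rw [← Finset.sum_sub_distrib]
              exact Finset.sum_congr rfl (fun i _ => h4 i)]
            ring
        _ ≤ 0 + ∑ i, (clCard cl i:ℝ) * (L₁ * (lam2 * (2*R))) := by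
            apply add_le_add _ (Finset.sum_le_sum (fun i _ => h6 i))
            linarith
        _ = (N:ℝ) * (L₁ * (lam2 * (2*R))) := by
            rw [zero_add, ← Finset.sum_mul, hsumcard]
    calc (∑ n, ⟪hP n, xstar n - xhat n⟫)
        = (∑ n, ⟪hI (cl n), xstar n - xhat n⟫)
          + ∑ n, ⟪hP n - hI (cl n), xstar n - xhat n⟫ := by
          rw [← Finset.sum_add_distrib]
          apply Finset.sum_congr rfl
          intro n _
          rw [inner_sub_left]
          ring
      _ ≤ (N:ℝ) * (L₁ * (lam2 * (2*R))) + ∑ _n : Fin N, Df * (2*R) :=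
          add_le_add hpart1 (Finset.sum_le_sum (fun n _ => hpart2 n))
      _ = (N:ℝ) * (L₁ * (lam2 * (2*R))) + (N:ℝ) * (Df * (2*R)) := by
          rw [Finset.sum_const, Finset.card_univ, Fintype.card_fin, nsmul_eq_mul]
  -- assemble
  have hfinal : (N:ℝ) * β * ‖avg xhat - avg xstar‖ ^ 2 ≤ 2 * R * L₂ + (N:ℝ) * K := by
    rw [hinner] at hmain
    have hKval : (N:ℝ) * (L₁ * (lam1 * (2*R))) + ((N:ℝ) * (L₁ * (lam2 * (2*R)))
        + (N:ℝ) * (Df * (2*R))) = (N:ℝ) * K := by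
      rw [hK, hlam1def, hlam2def]
      field_simp [hρ.ne']
      ring
    linarith
  have hKnn : 0 ≤ K := by
    rw [hK]
    apply mul_nonneg (by positivity)
    apply add_nonneg _ hDf0
    apply div_nonneg _ hρ.le
    positivity
  have hnorm_eq : ‖avgI cl xI - avg xhat‖ = ‖avg xhat - avg xstar‖ := by
    rw [norm_sub_rev, havgx]
  have ht0 : (0:ℝ) ≤ ‖avg xhat - avg xstar‖ := norm_nonneg _
  have ht2 : ‖avg xhat - avg xstar‖ ^ 2 ≤ 2*R*L₂/(β*(N:ℝ)) + K/β := by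
    have h2 : ‖avg xhat - avg xstar‖ ^ 2 ≤ (2*R*L₂ + (N:ℝ)*K)/((N:ℝ)*β) := by
      rw [le_div_iff₀ (by positivity)]
      calc ‖avg xhat - avg xstar‖ ^ 2 * ((N:ℝ)*β) = (N:ℝ)*β*‖avg xhat - avg xstar‖ ^ 2 := by
            ring
        _ ≤ 2*R*L₂ + (N:ℝ)*K := hfinal
    calc ‖avg xhat - avg xstar‖ ^ 2 ≤ (2*R*L₂ + (N:ℝ)*K)/((N:ℝ)*β) := h2
      _ = 2*R*L₂/(β*(N:ℝ)) + K/β := by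
          field_simp [hNR.ne', hβ.ne']
  calc ‖avgI cl xI - avg xhat‖ = ‖avg xhat - avg xstar‖ := hnorm_eq
    _ = Real.sqrt (‖avg xhat - avg xstar‖ ^ 2) := (Real.sqrt_sq ht0).symm
    _ ≤ Real.sqrt (2*R*L₂/(β*(N:ℝ)) + K/β) := Real.sqrt_le_sqrt ht2
    _ ≤ Real.sqrt (2*R*L₂/(β*(N:ℝ))) + Real.sqrt (K/β) :=
        sqrt_add_le_sqrt_add_sqrt (by positivity) (div_nonneg hKnn hβ.le)
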